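/- arXiv:1810.07874 — 6 statements merged into one kernel-verified Lean document; each statement's English description precedes it below -/
import Mathlib

section
/- Let A ∈ ℝ^{M×N}, B ∈ ℝ^{N×R}, C ∈ ℝ^{R×R}, D ∈ ℝ^{M×M}, E ∈ ℝ^{M×R}, and X ∈ ℝ^{M×R}. Then X satisfies the matrix equation A (B ∗ ((B ∗ (Aᵀ X)) C)) + D X = E if and only if vec(X) satisfies the linear system H vec(X) = vec(E), where H = I_R ⊗ D + (I_R ⊗ A) · diag(vec(B)) · (Cᵀ ⊗ I_N) · diag(vec(B)) · (I_R ⊗ Aᵀ). -/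
open Matrix
open scoped Matrix Kronecker

/-!
Vectorization turns `X ↦ A * X` into `I ⊗ A`, `Y ↦ Y * C` into `Cᵀ ⊗ I` and `Y ↦ B ⊙ Y` into
`diag (vec B)`, so `H * vec X` is the vectorization of the left-hand side of the matrix equation;
since `vec` is injective the two equations are equivalent.
-/

/-- Column-stacking (vectorization) of a matrix: `vec P (r, m) = P m r`. -/
def vec {m r : Type*} (P : Matrix m r ℝ) : r × m → ℝ := fun p => P p.2 p.1

theorem vec_eq_matrix_vec {m r : Type*} (P : Matrix m r ℝ) : _root_.vec P = Matrix.vec P := rfl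

namespace Matrix

variable {l m n R : Type*} [Fintype m] [Fintype n]

theorem diagonal_vec_mulVec_vec [NonUnitalNonAssocSemiring R] [DecidableEq m] [DecidableEq n]
    (B Y : Matrix m n R) :
    diagonal (vec B) *ᵥ vec Y = vec (B ⊙ Y) := by
  ext p
  rw [mulVec_diagonal, vec_hadamard, Pi.mul_apply]

theorem transpose_kronecker_one_mulVec_vec [CommSemiring R] [DecidableEq m]
    (Y : Matrix m n R) (C : Matrix n l R) :
    (Cᵀ ⊗ₖ (1 : Matrix m m R)) *ᵥ vec Y = vec (Y * C) := by
  rw [kronecker_mulVec_vec, Matrix.one_mul, transpose_transpose]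

theorem kronecker_hadamard_system_mulVec_vec [CommSemiring R] [Fintype l] [DecidableEq l]
    [DecidableEq n] (A : Matrix m n R) (B : Matrix n l R) (C : Matrix l l R) (D : Matrix m m R)
    (X : Matrix m l R) :
    ((1 : Matrix l l R) ⊗ₖ D + ((1 : Matrix l l R) ⊗ₖ A) * diagonal (vec B) *
        (Cᵀ ⊗ₖ (1 : Matrix n n R)) * diagonal (vec B) * ((1 : Matrix l l R) ⊗ₖ Aᵀ)) *ᵥ vec X =
      vec (A * (B ⊙ ((B ⊙ (Aᵀ * X)) * C)) + D * X) := by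
  simp only [add_mulVec, ← mulVec_mulVec, ← vec_mul_eq_mulVec, diagonal_vec_mulVec_vec,
    transpose_kronecker_one_mulVec_vec, vec_add]
  exact add_comm _ _

end Matrix

/-- Theorem 1 of the paper: the matrix equation
`A (B ∗ ((B ∗ (Aᵀ X)) C)) + D X = E` is equivalent to the linear system
`H vec(X) = vec(E)` with
`H = I ⊗ D + (I ⊗ A) diag(vec B) (Cᵀ ⊗ I) diag(vec B) (I ⊗ Aᵀ)`. -/
theorem stmt0 {M N R : ℕ}
    (A : Matrix (Fin M) (Fin N) ℝ) (B : Matrix (Fin N) (Fin R) ℝ)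
    (C : Matrix (Fin R) (Fin R) ℝ) (D : Matrix (Fin M) (Fin M) ℝ)
    (E : Matrix (Fin M) (Fin R) ℝ) (X : Matrix (Fin M) (Fin R) ℝ) :
    A * (B ⊙ ((B ⊙ (Aᵀ * X)) * C)) + D * X = E ↔
      ((1 : Matrix (Fin R) (Fin R) ℝ) ⊗ₖ D +
        ((1 : Matrix (Fin R) (Fin R) ℝ) ⊗ₖ A) * Matrix.diagonal (_root_.vec B) *
          (Cᵀ ⊗ₖ (1 : Matrix (Fin N) (Fin N) ℝ)) * Matrix.diagonal (_root_.vec B) *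
          ((1 : Matrix (Fin R) (Fin R) ℝ) ⊗ₖ Aᵀ)).mulVec (_root_.vec X) = _root_.vec E := by
  rw [vec_eq_matrix_vec, vec_eq_matrix_vec, vec_eq_matrix_vec,
    kronecker_hadamard_system_mulVec_vec, vec_inj]
end

section
/- Let A ∈ ℝ^{N×K} with K ≤ N, and let A = U Λ Vᵀ be a singular value decomposition of A with singular values σ_1, …, σ_K. Then for every B ∈ ℝ^{N×K} with Bᵀ B = I_K one has tr(Aᵀ B) ≤ Σ_{k=1}^{K} σ_k, and equality holds for B = U [I_K; 0] Vᵀ, where [I_K; 0] ∈ ℝ^{N×K} stacks the K×K identity matrix on top of the (N−K)×K zero matrix. -/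
/-!
Writing `A = U Λ Vᵀ`, cyclicity of the trace gives `tr(Aᵀ B) = tr(Λᵀ C)` with `C = Uᵀ B V`, which
again has orthonormal columns. Since `Λ` is diagonal, `tr(Λᵀ C) = Σ_k σ_k C_kk`, and every entry
of a matrix with orthonormal columns is at most `1`. For `B = U [I_K; 0] Vᵀ` one gets
`C = [I_K; 0]`, whose diagonal entries are all `1`.
-/

open Matrix
open scoped Matrix

/-- The `N × K` matrix `[I_K; 0]` stacking the identity on top of zeros. -/
def idZero (N K : ℕ) : Matrix (Fin N) (Fin K) ℝ :=
  Matrix.of fun i j => if (i : ℕ) = (j : ℕ) then 1 else 0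

namespace Matrix

variable {m n p : Type*} [Fintype m] [Fintype n] [Fintype p]

theorem trace_transpose_mul_eq_of_eq_mul_mul_transpose {R : Type*} [CommRing R]
    {A B : Matrix m n R} {U : Matrix m p R} {Λ : Matrix p n R} {V : Matrix n n R}
    (hA : A = U * Λ * Vᵀ) : trace (Aᵀ * B) = trace (Λᵀ * (Uᵀ * B * V)) := by
  rw [hA, transpose_mul, transpose_mul, transpose_transpose, Matrix.mul_assoc, Matrix.mul_assoc,
    trace_mul_comm, Matrix.mul_assoc, Matrix.mul_assoc]

theorem transpose_mul_self_eq_one_of_mul {R : Type*} [CommRing R] [DecidableEq m]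
    [DecidableEq n] [DecidableEq p] {B : Matrix m n R} {U : Matrix m p R} {V : Matrix n n R}
    (hU : U * Uᵀ = 1) (hB : Bᵀ * B = 1) (hV : Vᵀ * V = 1) :
    (Uᵀ * B * V)ᵀ * (Uᵀ * B * V) = 1 := by
  calc (Uᵀ * B * V)ᵀ * (Uᵀ * B * V) = Vᵀ * (Bᵀ * (U * Uᵀ) * B) * V := by
        simp only [transpose_mul, transpose_transpose, Matrix.mul_assoc]
    _ = 1 := by rw [hU, Matrix.mul_one, hB, Matrix.mul_one, hV]

omit [Fintype n] in
theorem apply_le_one_of_transpose_mul_self_eq_one [DecidableEq n] {C : Matrix m n ℝ}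
    (hC : Cᵀ * C = 1) (i : m) (k : n) : C i k ≤ 1 := by
  have hcol : ∑ j, C j k ^ 2 = 1 := by
    simpa [mul_apply, one_apply, pow_two] using congrFun (congrFun hC k) k
  have hsq : C i k ^ 2 ≤ 1 :=
    hcol ▸ Finset.single_le_sum (f := fun j => C j k ^ 2) (fun j _ => sq_nonneg _)
      (Finset.mem_univ i)
  nlinarith

end Matrix

section RectangularDiagonal

variable {N K : ℕ} {Λ : Matrix (Fin N) (Fin K) ℝ}

theorem trace_transpose_mul_of_rectangular_diagonal (hKN : K ≤ N)
    (hΛ : ∀ (i : Fin N) (j : Fin K), (i : ℕ) ≠ (j : ℕ) → Λ i j = 0)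
    (C : Matrix (Fin N) (Fin K) ℝ) :
    trace (Λᵀ * C) = ∑ k, Λ (Fin.castLE hKN k) k * C (Fin.castLE hKN k) k := by
  refine Finset.sum_congr rfl fun k _ => ?_
  rw [diag_apply, mul_apply]
  refine Finset.sum_eq_single (Fin.castLE hKN k) (fun i _ hi => ?_)
    (fun h => absurd (Finset.mem_univ _) h)
  rw [transpose_apply, hΛ i k (by simpa [Fin.ext_iff] using hi), zero_mul]

theorem trace_transpose_mul_le_of_rectangular_diagonal (hKN : K ≤ N)
    (hΛ : ∀ (i : Fin N) (j : Fin K), (i : ℕ) ≠ (j : ℕ) → Λ i j = 0)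
    (hΛnonneg : ∀ (i : Fin N) (j : Fin K), 0 ≤ Λ i j)
    {C : Matrix (Fin N) (Fin K) ℝ} (hC : Cᵀ * C = 1) :
    trace (Λᵀ * C) ≤ ∑ k : Fin K, Λ (Fin.castLE hKN k) k := by
  rw [trace_transpose_mul_of_rectangular_diagonal hKN hΛ]
  refine Finset.sum_le_sum fun k _ => ?_
  exact mul_le_of_le_one_right (hΛnonneg _ _) (apply_le_one_of_transpose_mul_self_eq_one hC _ _)

theorem idZero_castLE (hKN : K ≤ N) (k : Fin K) : idZero N K (Fin.castLE hKN k) k = 1 := by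
  simp [idZero]

end RectangularDiagonal

/-- Given an SVD `A = U Λ Vᵀ` of `A ∈ ℝ^{N×K}` (`K ≤ N`), for every `B` with
`Bᵀ B = I` one has `tr(Aᵀ B) ≤ Σ_k σ_k`, and equality holds for
`B = U [I_K; 0] Vᵀ`. -/
theorem stmt3 {N K : ℕ} (hKN : K ≤ N)
    (A : Matrix (Fin N) (Fin K) ℝ)
    (U : Matrix (Fin N) (Fin N) ℝ) (Λ : Matrix (Fin N) (Fin K) ℝ)
    (V : Matrix (Fin K) (Fin K) ℝ)
    (hU : Uᵀ * U = 1) (hV : Vᵀ * V = 1)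
    (hΛdiag : ∀ (i : Fin N) (j : Fin K), (i : ℕ) ≠ (j : ℕ) → Λ i j = 0)
    (hΛnonneg : ∀ (i : Fin N) (j : Fin K), 0 ≤ Λ i j)
    (hSVD : A = U * Λ * Vᵀ) :
    (∀ B : Matrix (Fin N) (Fin K) ℝ, Bᵀ * B = 1 →
        Matrix.trace (Aᵀ * B) ≤ ∑ k : Fin K, Λ (Fin.castLE hKN k) k) ∧
    Matrix.trace (Aᵀ * (U * idZero N K * Vᵀ)) = ∑ k : Fin K, Λ (Fin.castLE hKN k) k := by
  refine ⟨fun B hB => ?_, ?_⟩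
  · rw [trace_transpose_mul_eq_of_eq_mul_mul_transpose hSVD]
    exact trace_transpose_mul_le_of_rectangular_diagonal hKN hΛdiag hΛnonneg
      (transpose_mul_self_eq_one_of_mul (mul_eq_one_comm.mp hU) hB hV)
  · have hC : Uᵀ * (U * idZero N K * Vᵀ) * V = idZero N K := by
      simp only [← Matrix.mul_assoc, hU, Matrix.one_mul]
      rw [Matrix.mul_assoc, hV, Matrix.mul_one]
    rw [trace_transpose_mul_eq_of_eq_mul_mul_transpose hSVD, hC,
      trace_transpose_mul_of_rectangular_diagonal hKN hΛdiag]
    simp only [idZero_castLE hKN, mul_one]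
end

section
/- Let A ∈ ℝ^{M×N}, B ∈ ℝ^{N×R}, let C ∈ ℝ^{R×R} be symmetric positive semidefinite, and let D ∈ ℝ^{M×M} be symmetric positive definite. Then the matrix H = I_R ⊗ D + (I_R ⊗ A) · diag(vec(B)) · (Cᵀ ⊗ I_N) · diag(vec(B)) · (I_R ⊗ Aᵀ) ∈ ℝ^{MR×MR} is symmetric positive definite; in particular H is invertible. -/
/-! The second summand of `H` is a congruence `X K Xᵀ` of the positive semidefinite
`K = Cᵀ ⊗ I` by `X = (I ⊗ A) diag(vec B)`, and `I ⊗ D` is positive definite. -/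

open Matrix
open scoped Matrix Kronecker

theorem Matrix.one_kronecker_mul_diagonal_mul_mul_eq_mul_mul_conjTranspose {l m n S : Type*}
    [CommSemiring S] [StarRing S] [TrivialStar S] [Fintype l] [Fintype m] [DecidableEq l]
    [DecidableEq m] (A : Matrix n m S) (v : l × m → S) (K : Matrix (l × m) (l × m) S) :
    ((1 : Matrix l l S) ⊗ₖ A) * diagonal v * K * diagonal v * ((1 : Matrix l l S) ⊗ₖ Aᵀ) =
      (((1 : Matrix l l S) ⊗ₖ A) * diagonal v) * K *
        (((1 : Matrix l l S) ⊗ₖ A) * diagonal v)ᴴ := by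
  rw [conjTranspose_eq_transpose_of_trivial, transpose_mul, diagonal_transpose,
    ← kroneckerMap_transpose, transpose_one]
  simp only [Matrix.mul_assoc]

/-- If `C` is symmetric positive semidefinite and `D` is symmetric positive
definite, then `H = I ⊗ D + (I ⊗ A) diag(vec B) (Cᵀ ⊗ I) diag(vec B) (I ⊗ Aᵀ)`
is symmetric positive definite; in particular `H` is invertible. -/
theorem stmt9 {M N R : ℕ}
    (A : Matrix (Fin M) (Fin N) ℝ) (B : Matrix (Fin N) (Fin R) ℝ)
    (C : Matrix (Fin R) (Fin R) ℝ) (D : Matrix (Fin M) (Fin M) ℝ)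
    (hC : C.PosSemidef) (hD : D.PosDef) :
    ((1 : Matrix (Fin R) (Fin R) ℝ) ⊗ₖ D +
        ((1 : Matrix (Fin R) (Fin R) ℝ) ⊗ₖ A) * Matrix.diagonal (_root_.vec B) *
          (Cᵀ ⊗ₖ (1 : Matrix (Fin N) (Fin N) ℝ)) * Matrix.diagonal (_root_.vec B) *
          ((1 : Matrix (Fin R) (Fin R) ℝ) ⊗ₖ Aᵀ)).PosDef ∧
      IsUnit ((1 : Matrix (Fin R) (Fin R) ℝ) ⊗ₖ D +
        ((1 : Matrix (Fin R) (Fin R) ℝ) ⊗ₖ A) * Matrix.diagonal (_root_.vec B) *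
          (Cᵀ ⊗ₖ (1 : Matrix (Fin N) (Fin N) ℝ)) * Matrix.diagonal (_root_.vec B) *
          ((1 : Matrix (Fin R) (Fin R) ℝ) ⊗ₖ Aᵀ)) := by
  have hK : (Cᵀ ⊗ₖ (1 : Matrix (Fin N) (Fin N) ℝ)).PosSemidef :=
    hC.transpose.kronecker PosSemidef.one
  have hH := (PosDef.one.kronecker hD).add_posSemidef (hK.mul_mul_conjTranspose_same
    (((1 : Matrix (Fin R) (Fin R) ℝ) ⊗ₖ A) * diagonal (_root_.vec B)))
  rw [← one_kronecker_mul_diagonal_mul_mul_eq_mul_mul_conjTranspose] at hH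
  exact ⟨hH, hH.isUnit⟩
end

section
/- Let A ∈ ℝ^{M×N}, B ∈ ℝ^{N×R}, let C ∈ ℝ^{R×R} be symmetric positive semidefinite, let D ∈ ℝ^{M×M} be symmetric positive definite, and let E ∈ ℝ^{M×R}. Then the matrix equation A (B ∗ ((B ∗ (Aᵀ X)) C)) + D X = E has a unique solution X ∈ ℝ^{M×R}, characterized by vec(X) = H⁻¹ vec(E) with H = I_R ⊗ D + (I_R ⊗ A) · diag(vec(B)) · (Cᵀ ⊗ I_N) · diag(vec(B)) · (I_R ⊗ Aᵀ). -/
open Matrix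
open scoped Matrix Kronecker

/-
The vectorized operator `X ↦ A (B ⊙ ((B ⊙ Aᵀ X) C)) + D X` is `H = 1 ⊗ D + Pᴴ (Cᵀ ⊗ 1) P`
with `P = diag(vec B) (1 ⊗ Aᵀ)`. Since `Cᵀ ⊗ 1` is positive semidefinite and `1 ⊗ D` positive
definite, `H` is positive definite, hence invertible, and `vec` turns the matrix equation into
`H vec X = vec E`.
-/
namespace Matrix

variable {m n r R : Type*} [Fintype m] [Fintype n] [Fintype r] [DecidableEq n] [DecidableEq r]

def vecSystemMatrix [CommSemiring R] (A : Matrix m n R) (B : Matrix n r R) (C : Matrix r r R)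
    (D : Matrix m m R) : Matrix (r × m) (r × m) R :=
  (1 : Matrix r r R) ⊗ₖ D + ((1 : Matrix r r R) ⊗ₖ A) * diagonal B.vec *
    (Cᵀ ⊗ₖ (1 : Matrix n n R)) * diagonal B.vec * ((1 : Matrix r r R) ⊗ₖ Aᵀ)

omit [DecidableEq r] in
theorem vec_mul_eq_kronecker_mulVec [CommSemiring R] (Y : Matrix n r R) (C : Matrix r r R) :
    (Y * C).vec = (Cᵀ ⊗ₖ (1 : Matrix n n R)) *ᵥ Y.vec := by
  rw [kronecker_mulVec_vec, Matrix.one_mul, transpose_transpose]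

theorem vec_hadamard_eq_diagonal_mulVec [CommSemiring R] (B Y : Matrix n r R) :
    (B ⊙ Y).vec = diagonal B.vec *ᵥ Y.vec := by
  ext p
  rw [vec_hadamard, mulVec_diagonal, Pi.mul_apply]

theorem vecSystemMatrix_mulVec_vec [CommSemiring R] (A : Matrix m n R) (B : Matrix n r R)
    (C : Matrix r r R) (D : Matrix m m R) (X : Matrix m r R) :
    vecSystemMatrix A B C D *ᵥ X.vec = (A * (B ⊙ ((B ⊙ (Aᵀ * X)) * C)) + D * X).vec := by
  simp only [vecSystemMatrix, add_mulVec, ← mulVec_mulVec]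
  rw [vec_add, add_comm, vec_mul_eq_mulVec A, vec_hadamard_eq_diagonal_mulVec,
    vec_mul_eq_kronecker_mulVec, vec_hadamard_eq_diagonal_mulVec, vec_mul_eq_mulVec Aᵀ,
    vec_mul_eq_mulVec D]

theorem posDef_vecSystemMatrix (A : Matrix m n ℝ) (B : Matrix n r ℝ) {C : Matrix r r ℝ}
    {D : Matrix m m ℝ} (hC : C.PosSemidef) (hD : D.PosDef) :
    (vecSystemMatrix A B C D).PosDef := by
  set P := diagonal B.vec * ((1 : Matrix r r ℝ) ⊗ₖ Aᵀ)
  have hP_adj : Pᴴ = (1 ⊗ₖ A) * diagonal B.vec := by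
    rw [conjTranspose_eq_transpose_of_trivial, transpose_mul, diagonal_transpose,
      ← kroneckerMap_transpose, transpose_one, transpose_transpose]
    -- the two sides differ only in the instance path to `Mul ℝ`
    rfl
  have hPSP : (Pᴴ * (Cᵀ ⊗ₖ (1 : Matrix n n ℝ)) * P).PosSemidef :=
    (hC.transpose.kronecker PosSemidef.one).conjTranspose_mul_mul_same P
  rw [hP_adj] at hPSP
  simp only [P, ← Matrix.mul_assoc] at hPSP
  exact (PosDef.one.kronecker hD).add_posSemidef hPSP

theorem mulVec_eq_iff_eq_inv_mulVec {ι : Type*} [Fintype ι] [DecidableEq ι] [CommRing R]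
    (H : Matrix ι ι R) [Invertible H] {x y : ι → R} : H *ᵥ x = y ↔ x = H⁻¹ *ᵥ y :=
  ⟨fun h => (inv_mulVec_eq_vec h.symm).symm,
    fun h => by rw [h, mulVec_mulVec, mul_inv_of_invertible, one_mulVec]⟩

theorem existsUnique_and_iff_of_mulVec_vec [CommRing R] {L : Matrix n r R → Matrix n r R}
    (H : Matrix (r × n) (r × n) R) [Invertible H] (hL : ∀ X, H *ᵥ X.vec = (L X).vec)
    (E : Matrix n r R) :
    (∃! X, L X = E) ∧ ∀ X, L X = E ↔ X.vec = H⁻¹ *ᵥ E.vec := by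
  have key : ∀ X, L X = E ↔ X.vec = H⁻¹ *ᵥ E.vec := fun X => by
    rw [← vec_inj, ← hL, mulVec_eq_iff_eq_inv_mulVec]
  obtain ⟨X, hX⟩ := vec_bijective.surjective (H⁻¹ *ᵥ E.vec)
  exact ⟨⟨X, (key X).2 hX, fun Y hY => vec_inj.1 (((key Y).1 hY).trans hX.symm)⟩, key⟩

end Matrix

/-- If `C` is symmetric positive semidefinite and `D` is symmetric positive
definite, then `A (B ∗ ((B ∗ (Aᵀ X)) C)) + D X = E` has a unique solution `X`,
characterized by `vec(X) = H⁻¹ vec(E)`. -/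
theorem stmt10 {M N R : ℕ}
    (A : Matrix (Fin M) (Fin N) ℝ) (B : Matrix (Fin N) (Fin R) ℝ)
    (C : Matrix (Fin R) (Fin R) ℝ) (D : Matrix (Fin M) (Fin M) ℝ)
    (E : Matrix (Fin M) (Fin R) ℝ)
    (hC : C.PosSemidef) (hD : D.PosDef) :
    (∃! X : Matrix (Fin M) (Fin R) ℝ,
        A * (B ⊙ ((B ⊙ (Aᵀ * X)) * C)) + D * X = E) ∧
    ∀ X : Matrix (Fin M) (Fin R) ℝ,
      A * (B ⊙ ((B ⊙ (Aᵀ * X)) * C)) + D * X = E ↔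
        _root_.vec X = ((1 : Matrix (Fin R) (Fin R) ℝ) ⊗ₖ D +
            ((1 : Matrix (Fin R) (Fin R) ℝ) ⊗ₖ A) * Matrix.diagonal (_root_.vec B) *
              (Cᵀ ⊗ₖ (1 : Matrix (Fin N) (Fin N) ℝ)) * Matrix.diagonal (_root_.vec B) *
              ((1 : Matrix (Fin R) (Fin R) ℝ) ⊗ₖ Aᵀ))⁻¹.mulVec (_root_.vec E) := by
  have := (posDef_vecSystemMatrix A B hC hD).isUnit.invertible
  exact existsUnique_and_iff_of_mulVec_vec _ (vecSystemMatrix_mulVec_vec A B C D) E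
end

section
/- Let A ∈ ℝ^{M×N}, B ∈ ℝ^{N×R}, W ∈ ℝ^{K×R}, F ∈ ℝ^{N×K}, let P ∈ ℝ^{M×M} be symmetric, and let γ ≥ 0. Define J(X) = ‖(B ∗ (Aᵀ X)) Wᵀ − F‖²_F + γ tr(Xᵀ P X). Then the gradient of J at X is ∇J(X) = 2 [ A (B ∗ ((B ∗ (Aᵀ X)) Wᵀ W)) − A (B ∗ (F W)) + γ P X ]; in particular, X is a critical point of J if and only if A (B ∗ ((B ∗ (Aᵀ X)) Wᵀ W)) − A (B ∗ (F W)) + γ P X = 0. -/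
/-!
Along a line `X + tE` the residual `(B ∗ (Aᵀ(X + tE)))Wᵀ − F` is affine in `t`, so `J` is a
quadratic polynomial in `t`. With `R` the residual at `X` and `⟨U, V⟩ = tr(UᵀV)` the Frobenius
inner product, its derivative at `0` is `2⟨R, (B ∗ (AᵀE))Wᵀ⟩ + 2γ⟨E, PX⟩`, symmetry of `P`
merging the two cross terms of the penalty. The linear map `E ↦ (B ∗ (AᵀE))Wᵀ` has adjoint
`R ↦ A (B ∗ (RW))`, because the Hadamard product with `B` is self-adjoint, so the derivative is
`2⟨E, ∇⟩` with `∇` the claimed matrix, and `E = single i j 1` extracts its `(i, j)` entry.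
-/

open Matrix
open scoped Matrix

/-- Squared Frobenius norm of a matrix. -/
def frobSq {m n : Type*} [Fintype m] [Fintype n] (P : Matrix m n ℝ) : ℝ :=
  ∑ i, ∑ j, (P i j) ^ 2

/-- The objective `J(X) = ‖(B ∗ (Aᵀ X)) Wᵀ − F‖²_F + γ tr(Xᵀ P X)`. -/
def J {M N R K : ℕ}
    (A : Matrix (Fin M) (Fin N) ℝ) (B : Matrix (Fin N) (Fin R) ℝ)
    (W : Matrix (Fin K) (Fin R) ℝ) (F : Matrix (Fin N) (Fin K) ℝ)
    (P : Matrix (Fin M) (Fin M) ℝ) (γ : ℝ)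
    (X : Matrix (Fin M) (Fin R) ℝ) : ℝ :=
  frobSq ((B ⊙ (Aᵀ * X)) * Wᵀ - F) + γ * Matrix.trace (Xᵀ * P * X)

section

variable {k m n r : Type*} [Fintype k] [Fintype m] [Fintype n] [Fintype r]

theorem frobSq_eq_trace (C : Matrix m n ℝ) : frobSq C = trace (Cᵀ * C) := by
  rw [frobSq, trace, Finset.sum_comm]
  simp only [diag_apply, mul_apply, transpose_apply, sq]

theorem trace_transpose_mul_mul_comm (P : Matrix m m ℝ) (hP : Pᵀ = P) (X E : Matrix m n ℝ) :
    trace (Xᵀ * P * E) = trace (Eᵀ * P * X) := by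
  rw [← trace_transpose, transpose_mul, transpose_mul, transpose_transpose, hP, Matrix.mul_assoc]

theorem hasDerivAt_trace_quadForm (P : Matrix m m ℝ) (hP : Pᵀ = P) (X E : Matrix m n ℝ) :
    HasDerivAt (fun t : ℝ => trace ((X + t • E)ᵀ * P * (X + t • E)))
      (2 * trace (Eᵀ * P * X)) 0 := by
  have hpoly : (fun t : ℝ => trace ((X + t • E)ᵀ * P * (X + t • E))) = fun t =>
      trace (Xᵀ * P * X) + t * (2 * trace (Eᵀ * P * X)) + t ^ 2 * trace (Eᵀ * P * E) := by
    funext t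
    simp only [transpose_add, transpose_smul, Matrix.add_mul, Matrix.mul_add, smul_mul,
      Matrix.mul_smul, trace_add, trace_smul, smul_eq_mul, trace_transpose_mul_mul_comm P hP X E]
    ring
  rw [hpoly]
  simpa using (((hasDerivAt_id (0 : ℝ)).mul_const (2 * trace (Eᵀ * P * X))).const_add
    (trace (Xᵀ * P * X))).fun_add ((hasDerivAt_pow 2 (0 : ℝ)).mul_const (trace (Eᵀ * P * E)))

theorem hasDerivAt_frobSq_add_smul (C D : Matrix m n ℝ) :
    HasDerivAt (fun t : ℝ => frobSq (C + t • D)) (2 * trace (Dᵀ * C)) 0 := by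
  classical
  simpa only [frobSq_eq_trace, Matrix.mul_one] using
    hasDerivAt_trace_quadForm 1 transpose_one C D

theorem trace_hadamard_mul_transpose (B X Y : Matrix m n ℝ) :
    trace ((B ⊙ X) * Yᵀ) = trace (X * (B ⊙ Y)ᵀ) := by
  rw [← sum_hadamard_eq, ← sum_hadamard_eq]
  simp only [hadamard_apply]
  exact Finset.sum_congr rfl fun i _ => Finset.sum_congr rfl fun j _ => by ring

theorem trace_transpose_mul_hadamard_mul_transpose (A : Matrix m n ℝ) (B : Matrix n r ℝ)
    (W : Matrix k r ℝ) (C : Matrix n k ℝ) (E : Matrix m r ℝ) :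
    trace (((B ⊙ (Aᵀ * E)) * Wᵀ)ᵀ * C) = trace (Eᵀ * (A * (B ⊙ (C * W)))) := by
  calc trace (((B ⊙ (Aᵀ * E)) * Wᵀ)ᵀ * C)
      = trace ((B ⊙ (Aᵀ * E)) * (C * W)ᵀ) := by
        rw [← trace_transpose, transpose_mul, transpose_transpose, transpose_mul, trace_mul_comm,
          Matrix.mul_assoc]
    _ = trace ((Aᵀ * E) * (B ⊙ (C * W))ᵀ) := trace_hadamard_mul_transpose _ _ _
    _ = trace (Eᵀ * (A * (B ⊙ (C * W)))) := by
        rw [← trace_transpose, transpose_mul, transpose_mul, transpose_transpose,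
          transpose_transpose, trace_mul_comm, Matrix.mul_assoc]

theorem trace_transpose_single_mul [DecidableEq m] [DecidableEq n] (i : m) (j : n)
    (G : Matrix m n ℝ) : trace ((single i j (1 : ℝ))ᵀ * G) = G i j := by
  rw [transpose_single, trace_single_mul, one_smul]

end

theorem hasDerivAt_J_add_smul {M N R K : ℕ}
    (A : Matrix (Fin M) (Fin N) ℝ) (B : Matrix (Fin N) (Fin R) ℝ)
    (W : Matrix (Fin K) (Fin R) ℝ) (F : Matrix (Fin N) (Fin K) ℝ)
    (P : Matrix (Fin M) (Fin M) ℝ) (hP : Pᵀ = P) (γ : ℝ) (X E : Matrix (Fin M) (Fin R) ℝ) :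
    HasDerivAt (fun t : ℝ => J A B W F P γ (X + t • E))
      (2 * trace (Eᵀ *
        (A * (B ⊙ ((B ⊙ (Aᵀ * X)) * (Wᵀ * W))) - A * (B ⊙ (F * W)) + γ • (P * X)))) 0 := by
  set C := (B ⊙ (Aᵀ * X)) * Wᵀ - F
  have hresidual : ∀ t : ℝ,
      (B ⊙ (Aᵀ * (X + t • E))) * Wᵀ - F = C + t • ((B ⊙ (Aᵀ * E)) * Wᵀ) := fun t => by
    rw [Matrix.mul_add, Matrix.mul_smul, hadamard_add, hadamard_smul, Matrix.add_mul,
      smul_mul]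
    simp only [C]
    abel
  have hexpand : B ⊙ (C * W) = B ⊙ ((B ⊙ (Aᵀ * X)) * (Wᵀ * W)) - B ⊙ (F * W) := by
    ext p q
    simp only [C, Matrix.sub_mul, Matrix.mul_assoc, hadamard_apply, Matrix.sub_apply, mul_sub]
  unfold _root_.J
  simp_rw [hresidual]
  refine ((hasDerivAt_frobSq_add_smul C ((B ⊙ (Aᵀ * E)) * Wᵀ)).fun_add
    ((hasDerivAt_trace_quadForm P hP X E).const_mul γ)).congr_deriv ?_
  rw [trace_transpose_mul_hadamard_mul_transpose, hexpand]
  simp only [Matrix.mul_add, Matrix.mul_sub, Matrix.mul_smul, trace_add, trace_sub, trace_smul,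
    smul_eq_mul, Matrix.mul_assoc]
  ring

theorem stmt12_general {M N R K : ℕ}
    (A : Matrix (Fin M) (Fin N) ℝ) (B : Matrix (Fin N) (Fin R) ℝ)
    (W : Matrix (Fin K) (Fin R) ℝ) (F : Matrix (Fin N) (Fin K) ℝ)
    (P : Matrix (Fin M) (Fin M) ℝ) (hP : Pᵀ = P)
    (γ : ℝ) (X : Matrix (Fin M) (Fin R) ℝ) :
    (∀ (i : Fin M) (j : Fin R),
        HasDerivAt (fun t : ℝ => J A B W F P γ (X + t • Matrix.single i j (1 : ℝ)))
          ((2 : ℝ) *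
            ((A * (B ⊙ ((B ⊙ (Aᵀ * X)) * (Wᵀ * W))) - A * (B ⊙ (F * W)) + γ • (P * X)) i j))
          0) ∧
    ((∀ (i : Fin M) (j : Fin R),
        HasDerivAt (fun t : ℝ => J A B W F P γ (X + t • Matrix.single i j (1 : ℝ)))
          0 0) ↔
      A * (B ⊙ ((B ⊙ (Aᵀ * X)) * (Wᵀ * W))) - A * (B ⊙ (F * W)) + γ • (P * X) = 0) := by
  set G := A * (B ⊙ ((B ⊙ (Aᵀ * X)) * (Wᵀ * W))) - A * (B ⊙ (F * W)) + γ • (P * X)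
  have hpartial : ∀ i j, HasDerivAt (fun t : ℝ => J A B W F P γ (X + t • single i j (1 : ℝ)))
      (2 * G i j) 0 := fun i j => by
    simpa only [trace_transpose_single_mul] using
      hasDerivAt_J_add_smul A B W F P hP γ X (single i j 1)
  refine ⟨hpartial, ?_⟩
  calc (∀ i j, HasDerivAt (fun t : ℝ => J A B W F P γ (X + t • single i j (1 : ℝ))) 0 0)
      ↔ ∀ i j, 2 * G i j = 0 :=
        forall₂_congr fun i j => ⟨(hpartial i j).unique, fun h => h ▸ hpartial i j⟩
    _ ↔ G = 0 := by
        simp only [mul_eq_zero, two_ne_zero, false_or, ← Matrix.ext_iff, Matrix.zero_apply]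

/-- The gradient of `J` at `X` (entrywise, as the matrix of partial derivatives
with respect to the entries of `X`) is
`∇J(X) = 2 [A (B ∗ ((B ∗ (Aᵀ X)) Wᵀ W)) − A (B ∗ (F W)) + γ P X]`;
in particular `X` is a critical point of `J` iff
`A (B ∗ ((B ∗ (Aᵀ X)) Wᵀ W)) − A (B ∗ (F W)) + γ P X = 0`. -/
theorem stmt12 {M N R K : ℕ}
    (A : Matrix (Fin M) (Fin N) ℝ) (B : Matrix (Fin N) (Fin R) ℝ)
    (W : Matrix (Fin K) (Fin R) ℝ) (F : Matrix (Fin N) (Fin K) ℝ)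
    (P : Matrix (Fin M) (Fin M) ℝ) (hP : Pᵀ = P)
    (γ : ℝ) (hγ : 0 ≤ γ) (X : Matrix (Fin M) (Fin R) ℝ) :
    (∀ (i : Fin M) (j : Fin R),
        HasDerivAt (fun t : ℝ => J A B W F P γ (X + t • Matrix.single i j (1 : ℝ)))
          ((2 : ℝ) *
            ((A * (B ⊙ ((B ⊙ (Aᵀ * X)) * (Wᵀ * W))) - A * (B ⊙ (F * W)) + γ • (P * X)) i j))
          0) ∧
    ((∀ (i : Fin M) (j : Fin R),
        HasDerivAt (fun t : ℝ => J A B W F P γ (X + t • Matrix.single i j (1 : ℝ)))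
          0 0) ↔
      A * (B ⊙ ((B ⊙ (Aᵀ * X)) * (Wᵀ * W))) - A * (B ⊙ (F * W)) + γ • (P * X) = 0) :=
  stmt12_general A B W F P hP γ X
end

section
/- Let A, B ∈ ℝ^{I×J} and suppose every row b^i of B is nonzero. Let P ∈ ℝ^{I×I} be the diagonal matrix with p_{ii} = 1/(2‖b^i‖₂). If tr(Aᵀ P A) ≤ tr(Bᵀ P B), then ‖A‖_{2,1} ≤ ‖B‖_{2,1}, where ‖X‖_{2,1} = Σ_{i=1}^{I} ‖x^i‖₂ is the sum of the Euclidean norms of the rows of X. -/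
open Matrix
open scoped Matrix

/-- Euclidean norm of a vector in `ℝ^J`. -/
noncomputable def rowEnorm {J : ℕ} (v : Fin J → ℝ) : ℝ := Real.sqrt (∑ j, v j ^ 2)

/-- The `ℓ_{2,1}` norm of a matrix: the sum of the Euclidean norms of its rows. -/
noncomputable def l21norm {I J : ℕ} (X : Matrix (Fin I) (Fin J) ℝ) : ℝ :=
  ∑ i, rowEnorm (X i)

/-! Row by row, `a ≤ a² / (2b) + b / 2` for `b > 0` (AM–GM, with equality at `a = b`). Summing,
`‖X‖_{2,1} ≤ tr(Xᵀ P X) + ‖B‖_{2,1} / 2` for every `X`, with equality at `X = B`; so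
`tr(Aᵀ P A) ≤ tr(Bᵀ P B)` gives `‖A‖_{2,1} ≤ ‖B‖_{2,1}`. -/

lemma rowEnorm_sq {J : ℕ} (v : Fin J → ℝ) : rowEnorm v ^ 2 = ∑ j, v j ^ 2 :=
  Real.sq_sqrt (Finset.sum_nonneg fun _ _ => sq_nonneg _)

lemma rowEnorm_pos {J : ℕ} {v : Fin J → ℝ} (hv : v ≠ 0) : 0 < rowEnorm v := by
  refine Real.sqrt_pos.2 (lt_of_le_of_ne (Finset.sum_nonneg fun _ _ => sq_nonneg _) ?_)
  intro hsum
  have hsq := (Fintype.sum_eq_zero_iff_of_nonneg fun j => sq_nonneg (v j)).1 hsum.symm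
  exact hv (funext fun j => pow_eq_zero_iff two_ne_zero |>.1 (congrFun hsq j))

lemma Matrix.trace_transpose_mul_diagonal_mul {m n R : Type*} [Fintype m] [Fintype n]
    [DecidableEq m] [CommSemiring R] (X : Matrix m n R) (d : m → R) :
    trace (Xᵀ * diagonal d * X) = ∑ i, d i * ∑ j, X i j ^ 2 := by
  simp only [trace, diag, mul_apply (M := Xᵀ * diagonal d), mul_diagonal, transpose_apply,
    Finset.mul_sum]
  rw [Finset.sum_comm]
  exact Fintype.sum_congr _ _ fun i => Fintype.sum_congr _ _ fun j => by ring

lemma trace_transpose_mul_diagonal_mul_eq_sum_rowEnorm_sq {I J : ℕ}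
    (X : Matrix (Fin I) (Fin J) ℝ) (d : Fin I → ℝ) :
    trace (Xᵀ * diagonal d * X) = ∑ i, d i * rowEnorm (X i) ^ 2 := by
  simp only [trace_transpose_mul_diagonal_mul, rowEnorm_sq]

lemma le_inv_two_mul_sq_add_half {a b : ℝ} (hb : 0 < b) : a ≤ 1 / (2 * b) * a ^ 2 + b / 2 := by
  have key : 1 / (2 * b) * a ^ 2 + b / 2 - a = (a - b) ^ 2 / (2 * b) := by
    field_simp
    ring
  have : 0 ≤ (a - b) ^ 2 / (2 * b) := by positivity
  linarith

lemma Finset.sum_le_sum_of_reweighted_sq_le {ι : Type*} (s : Finset ι) {a b : ι → ℝ}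
    (hb : ∀ i ∈ s, 0 < b i)
    (h : ∑ i ∈ s, 1 / (2 * b i) * a i ^ 2 ≤ ∑ i ∈ s, 1 / (2 * b i) * b i ^ 2) :
    ∑ i ∈ s, a i ≤ ∑ i ∈ s, b i := by
  have hself : ∀ i ∈ s, 1 / (2 * b i) * b i ^ 2 + b i / 2 = b i := fun i hi => by
    field_simp [(hb i hi).ne']
    ring
  calc ∑ i ∈ s, a i ≤ ∑ i ∈ s, (1 / (2 * b i) * a i ^ 2 + b i / 2) :=
        Finset.sum_le_sum fun i hi => le_inv_two_mul_sq_add_half (hb i hi)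
    _ ≤ ∑ i ∈ s, (1 / (2 * b i) * b i ^ 2 + b i / 2) := by
        simp only [Finset.sum_add_distrib]
        linarith
    _ = ∑ i ∈ s, b i := Finset.sum_congr rfl hself

/-- For `A, B ∈ ℝ^{I×J}` with all rows of `B` nonzero and
`P = diag(1/(2‖b^i‖₂))`: if `tr(Aᵀ P A) ≤ tr(Bᵀ P B)` then
`‖A‖_{2,1} ≤ ‖B‖_{2,1}`. -/
theorem stmt15 {I J : ℕ} (A B : Matrix (Fin I) (Fin J) ℝ)
    (hB : ∀ i : Fin I, B i ≠ 0)
    (h : Matrix.trace (Aᵀ * Matrix.diagonal (fun i => 1 / (2 * rowEnorm (B i))) * A) ≤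
         Matrix.trace (Bᵀ * Matrix.diagonal (fun i => 1 / (2 * rowEnorm (B i))) * B)) :
    l21norm A ≤ l21norm B := by
  rw [trace_transpose_mul_diagonal_mul_eq_sum_rowEnorm_sq,
    trace_transpose_mul_diagonal_mul_eq_sum_rowEnorm_sq] at h
  exact Finset.univ.sum_le_sum_of_reweighted_sq_le (fun i _ => rowEnorm_pos (hB i)) h
end
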